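/- arXiv:1405.3892 — 3 statements merged into one kernel-verified Lean document; each statement's English description precedes it below -/
import Mathlib

section
/- Let σ ∈ ℝ and let Â, B̂, Ĉ be bounded measurable functions on ℝ that are 2πσ-pseudo-periodic, i.e. F(q+2π) = e^{2πiσ}F(q). Then for all q ∈ [-π,π], the double periodic convolution satisfies χ_B(q) (Â *₁ B̂ *₁ Ĉ)(q) = χ_B(q) Σ_{m=-1}^{1} e^{2πimσ} (Â *₁ [B̂ *₁ (χ_B Ĉ)])(q - 2mπ), where (f *₁ g)(q) = ∫_{-π}^{π} f(ξ) g(q-ξ) dξ and χ_B is the indicator of B = [-π,π]. -/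
open MeasureTheory

/-- Periodic convolution over the fundamental cell B = [-π, π]. -/
noncomputable def conv1 (f g : ℝ → ℂ) (q : ℝ) : ℂ :=
  ∫ ξ in (-Real.pi)..Real.pi, f ξ * g (q - ξ)

/-- Indicator function of B = [-π, π]. -/
noncomputable def chiB (q : ℝ) : ℂ :=
  Set.indicator (Set.Icc (-Real.pi) Real.pi) (fun _ => (1 : ℂ)) q

/-!
On `[-3π, 3π] \ {±π}` exactly one translate `t - 2mπ`, `m ∈ {-1, 0, 1}`, lies in `B`, and there
pseudo-periodicity gives `C t = e^{2πimσ} C (t - 2mπ)`. Hence `C` agrees almost everywhere on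
`[-3π, 3π]` with `∑ₘ e^{2πimσ} (χ_B C)(· - 2mπ)`. For `y ∈ [-2π, 2π]` the convolution `(B *₁ C)(y)`
only sees `C` on `[y - π, y + π] ⊆ [-3π, 3π]`, and `*₁` commutes with translations, so
`B *₁ C = ∑ₘ e^{2πimσ} (B *₁ χ_B C)(· - 2mπ)` on `[-2π, 2π]`. For `q ∈ B`, `(A *₁ (B *₁ C))(q)`
only sees `B *₁ C` on `[q - π, q + π] ⊆ [-2π, 2π]`, and the same two facts conclude.
-/

open Real Complex Set

lemma measurable_chiB : Measurable chiB :=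
  measurable_const.indicator measurableSet_Icc

lemma norm_chiB_mul_le {F : ℝ → ℂ} {M : ℝ} (hF : ∀ x, ‖F x‖ ≤ M) (x : ℝ) :
    ‖chiB x * F x‖ ≤ M := by
  by_cases h : x ∈ Icc (-π) π
  · simpa [chiB, h] using hF x
  · simpa [chiB, h] using (norm_nonneg _).trans (hF x)

lemma sum_chiB_sub_int_mul_two_pi {t : ℝ} (ht : t ∈ Icc (-(3 * π)) (3 * π))
    (hπ : t ≠ π) (hnπ : t ≠ -π) :
    ∑ m ∈ Finset.Icc (-1 : ℤ) 1, chiB (t - 2 * m * π) = 1 := by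
  have hIcc : Finset.Icc (-1 : ℤ) 1 = {-1, 0, 1} := by decide
  obtain ⟨ht₁, ht₂⟩ := ht
  have hπ_pos := pi_pos
  rw [hIcc, Finset.sum_insert (by decide), Finset.sum_insert (by decide), Finset.sum_singleton]
  simp only [chiB, indicator_apply, mem_Icc]
  push_cast
  split_ifs <;> grind

def PseudoPeriodic (σ : ℝ) (F : ℝ → ℂ) : Prop :=
  ∀ q : ℝ, F (q + 2 * π) = exp (2 * π * I * σ) * F q

namespace PseudoPeriodic

variable {σ : ℝ} {F : ℝ → ℂ}

lemma periodic_exp_mul (hF : PseudoPeriodic σ F) :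
    Function.Periodic (fun q : ℝ => exp (-(σ * q * I)) * F q) (2 * π) := by
  intro q
  simp only [hF q, ← mul_assoc, ← Complex.exp_add]
  congr 2
  push_cast
  ring

lemma apply_add_int_mul (hF : PseudoPeriodic σ F) (m : ℤ) (q : ℝ) :
    F (q + m * (2 * π)) = exp (2 * π * I * m * σ) * F q := by
  have h := hF.periodic_exp_mul.int_mul m q
  rw [← mul_right_inj' (Complex.exp_ne_zero (-(σ * ((q + m * (2 * π) : ℝ) : ℂ) * I))), h,
    ← mul_assoc, ← Complex.exp_add]
  congr 2
  push_cast
  ring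

lemma eq_sum_chiB_mul (hF : PseudoPeriodic σ F) {t : ℝ} (ht : t ∈ Icc (-(3 * π)) (3 * π))
    (hπ : t ≠ π) (hnπ : t ≠ -π) :
    F t = ∑ m ∈ Finset.Icc (-1 : ℤ) 1,
      exp (2 * π * I * m * σ) * (chiB (t - 2 * m * π) * F (t - 2 * m * π)) := by
  have hterm (m : ℤ) : exp (2 * π * I * m * σ) * F (t - 2 * m * π) = F t := by
    rw [← hF.apply_add_int_mul]
    ring_nf
  simp only [mul_left_comm _ (chiB _), hterm, ← Finset.sum_mul,
    sum_chiB_sub_int_mul_two_pi ht hπ hnπ, one_mul]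

end PseudoPeriodic

section Convolution

variable {f g : ℝ → ℂ}

lemma Measurable.intervalIntegrable_of_norm_le (hf : Measurable f) {M : ℝ} (hM : ∀ x, ‖f x‖ ≤ M)
    (a b : ℝ) : IntervalIntegrable f volume a b :=
  intervalIntegrable_iff.2 <| Measure.integrableOn_of_bounded (μ := volume)
    measure_Ioc_lt_top.ne hf.aestronglyMeasurable (Filter.Eventually.of_forall hM)

lemma intervalIntegrable_mul_comp_sub {a b : ℝ} (hf : IntervalIntegrable f volume a b)
    (hg : Measurable g) {M : ℝ} (hM : ∀ x, ‖g x‖ ≤ M) (y : ℝ) :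
    IntervalIntegrable (fun ξ => f ξ * g (y - ξ)) volume a b :=
  intervalIntegrable_iff.2 <| (intervalIntegrable_iff.1 hf).mul_bdd
    (hg.comp (measurable_const.sub measurable_id)).aestronglyMeasurable
    (Filter.Eventually.of_forall fun ξ => hM (y - ξ))

lemma measurable_conv1 (hf : Measurable f) (hg : Measurable g) : Measurable (conv1 f g) := by
  have hsm : StronglyMeasurable fun p : ℝ × ℝ => f p.2 * g (p.1 - p.2) :=
    ((hf.comp measurable_snd).mul (hg.comp (measurable_fst.sub measurable_snd))).stronglyMeasurable
  convert (hsm.integral_prod_right' (ν := volume.restrict (Ioc (-π) π))).measurable using 1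
  ext y
  exact intervalIntegral.integral_of_le (neg_le_self pi_pos.le)

lemma norm_conv1_le {Mf Mg : ℝ} (hf : ∀ x, ‖f x‖ ≤ Mf) (hg : ∀ x, ‖g x‖ ≤ Mg) (y : ℝ) :
    ‖conv1 f g y‖ ≤ Mf * Mg * (2 * π) := by
  have hMf : 0 ≤ Mf := (norm_nonneg _).trans (hf 0)
  calc ‖conv1 f g y‖ ≤ Mf * Mg * |π - -π| :=
        intervalIntegral.norm_integral_le_of_norm_le_const fun ξ _ =>
          (norm_mul_le _ _).trans (mul_le_mul (hf ξ) (hg (y - ξ)) (norm_nonneg _) hMf)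
    _ = Mf * Mg * (2 * π) := by rw [abs_of_nonneg (by linarith [pi_pos])]; ring

lemma conv1_congr_ae {g₁ g₂ : ℝ → ℂ} {y : ℝ}
    (h : ∀ᵐ x, x ∈ Icc (y - π) (y + π) → g₁ x = g₂ x) : conv1 f g₁ y = conv1 f g₂ y := by
  refine intervalIntegral.integral_congr_ae ?_
  filter_upwards [(quasiMeasurePreserving_sub_left (volume : Measure ℝ) y).ae h] with ξ hξ hmem
  rw [uIoc_of_le (neg_le_self pi_pos.le)] at hmem
  rw [hξ ⟨by linarith [hmem.2], by linarith [hmem.1]⟩]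

lemma conv1_sum_shift {ι : Type*} {s : Finset ι} {c : ι → ℂ} {a : ι → ℝ} {y : ℝ}
    (hint : ∀ m ∈ s, IntervalIntegrable (fun ξ => f ξ * g (y - a m - ξ)) volume (-π) π) :
    conv1 f (fun x => ∑ m ∈ s, c m * g (x - a m)) y = ∑ m ∈ s, c m * conv1 f g (y - a m) := by
  have hintegrand (ξ : ℝ) : f ξ * ∑ m ∈ s, c m * g (y - ξ - a m) =
      ∑ m ∈ s, c m * (f ξ * g (y - a m - ξ)) := by
    simp only [Finset.mul_sum, sub_right_comm y ξ, mul_left_comm (f ξ)]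
  simp only [conv1, hintegrand, intervalIntegral.integral_finsetSum fun m hm =>
    (hint m hm).const_mul (c m), intervalIntegral.integral_const_mul]

end Convolution

lemma conv1_eq_sum_conv1_chiB_mul {σ : ℝ} {B C : ℝ → ℂ} (hB : IntervalIntegrable B volume (-π) π)
    (hCm : Measurable C) {M : ℝ} (hCM : ∀ x, ‖C x‖ ≤ M) (hC : PseudoPeriodic σ C) {y : ℝ}
    (hy : y ∈ Icc (-(2 * π)) (2 * π)) :
    conv1 B C y = ∑ m ∈ Finset.Icc (-1 : ℤ) 1,
      exp (2 * π * I * m * σ) * conv1 B (fun x => chiB x * C x) (y - 2 * m * π) := by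
  have hC_decomp : ∀ᵐ x, x ∈ Icc (y - π) (y + π) → C x = ∑ m ∈ Finset.Icc (-1 : ℤ) 1,
      exp (2 * π * I * m * σ) * (chiB (x - 2 * m * π) * C (x - 2 * m * π)) := by
    filter_upwards [Measure.ae_ne volume π, Measure.ae_ne volume (-π)] with x hπ hnπ hx
    exact hC.eq_sum_chiB_mul ⟨by linarith [hx.1, hy.1], by linarith [hx.2, hy.2]⟩ hπ hnπ
  rw [conv1_congr_ae hC_decomp]
  exact conv1_sum_shift (g := fun x => chiB x * C x) (a := fun m : ℤ => 2 * m * π) fun m _ =>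
    intervalIntegrable_mul_comp_sub hB (measurable_chiB.mul hCm) (norm_chiB_mul_le hCM) _

theorem triple_convolution_decomposition_general (σ : ℝ) (A B C : ℝ → ℂ)
    (hAm : Measurable A) (hBm : Measurable B) (hCm : Measurable C)
    (hAb : ∃ M : ℝ, ∀ q, ‖A q‖ ≤ M) (hBb : ∃ M : ℝ, ∀ q, ‖B q‖ ≤ M)
    (hCb : ∃ M : ℝ, ∀ q, ‖C q‖ ≤ M)
    (hCp : ∀ q : ℝ, C (q + 2 * Real.pi) = Complex.exp (2 * Real.pi * Complex.I * σ) * C q) :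
    ∀ q : ℝ, chiB q * conv1 A (conv1 B C) q
      = chiB q * ∑ m ∈ Finset.Icc (-1 : ℤ) 1,
          Complex.exp (2 * Real.pi * Complex.I * m * σ)
            * conv1 A (conv1 B (fun x => chiB x * C x)) (q - 2 * m * Real.pi) := by
  obtain ⟨MA, hMA⟩ := hAb
  obtain ⟨MB, hMB⟩ := hBb
  obtain ⟨MC, hMC⟩ := hCb
  intro q
  by_cases hq : q ∈ Icc (-π) π
  swap
  · simp [chiB, hq]
  congr 1
  have h_inner : ∀ x ∈ Icc (q - π) (q + π), conv1 B C x = ∑ m ∈ Finset.Icc (-1 : ℤ) 1,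
      exp (2 * π * I * m * σ) * conv1 B (fun x => chiB x * C x) (x - 2 * m * π) :=
    fun x hx => conv1_eq_sum_conv1_chiB_mul (hBm.intervalIntegrable_of_norm_le hMB _ _) hCm hMC
      hCp ⟨by linarith [hx.1, hq.1], by linarith [hx.2, hq.2]⟩
  rw [conv1_congr_ae (Filter.Eventually.of_forall h_inner)]
  exact conv1_sum_shift (g := conv1 B fun x => chiB x * C x) (a := fun m : ℤ => 2 * m * π)
    fun m _ => intervalIntegrable_mul_comp_sub (hAm.intervalIntegrable_of_norm_le hMA _ _)
      (measurable_conv1 hBm (measurable_chiB.mul hCm)) (norm_conv1_le hMB (norm_chiB_mul_le hMC)) _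

theorem triple_convolution_decomposition (σ : ℝ) (A B C : ℝ → ℂ)
    (hAm : Measurable A) (hBm : Measurable B) (hCm : Measurable C)
    (hAb : ∃ M : ℝ, ∀ q, ‖A q‖ ≤ M) (hBb : ∃ M : ℝ, ∀ q, ‖B q‖ ≤ M)
    (hCb : ∃ M : ℝ, ∀ q, ‖C q‖ ≤ M)
    (hAp : ∀ q : ℝ, A (q + 2 * Real.pi) = Complex.exp (2 * Real.pi * Complex.I * σ) * A q)
    (hBp : ∀ q : ℝ, B (q + 2 * Real.pi) = Complex.exp (2 * Real.pi * Complex.I * σ) * B q)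
    (hCp : ∀ q : ℝ, C (q + 2 * Real.pi) = Complex.exp (2 * Real.pi * Complex.I * σ) * C q) :
    ∀ q : ℝ, chiB q * conv1 A (conv1 B C) q
      = chiB q * ∑ m ∈ Finset.Icc (-1 : ℤ) 1,
          Complex.exp (2 * Real.pi * Complex.I * m * σ)
            * conv1 A (conv1 B (fun x => chiB x * C x)) (q - 2 * m * Real.pi) :=
  triple_convolution_decomposition_general σ A B C hAm hBm hCm hAb hBb hCb hCp
end

section
/- Fix a > 1/2 and constants c₁, c₂ > 0, and let c₃ = min(c₁, c₂). If f₁, f₂ : ℝ → ℂ satisfy e^{c₁|Q|} f₁(Q) ∈ L^{2,a}(ℝ) and e^{c₂|Q|} f₂(Q) ∈ L^{2,a}(ℝ), then e^{c₃|Q|} (f₁ * f₂)(Q) ∈ L^{2,a}(ℝ) with ‖e^{c₃|·|}(f₁*f₂)‖_{L^{2,a}} ≤ C ‖e^{c₃|·|} f₁‖_{L^{2,a}} ‖e^{c₃|·|} f₂‖_{L^{2,a}}. -/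
/-!
With `c = min c₁ c₂` and `φᵢ = e^{c|·|} |fᵢ|`, the triangle inequality `c|Q| ≤ c|ξ| + c|Q - ξ|`
gives `e^{c|Q|} |(f₁ * f₂)(Q)| ≤ (φ₁ * φ₂)(Q)`, so it suffices that `L^{2,a}` is a convolution
algebra for `a > 1/2`. For that, split `⟨Q⟩^a ≤ 2^a (⟨ξ⟩^a + ⟨Q - ξ⟩^a)` inside the convolution
integral, apply Young's inequality `‖k * g‖₂ ≤ ‖k‖₁ ‖g‖₂` to both pieces, and bound the `L¹` norm
by Cauchy–Schwarz: `‖φ‖₁ ≤ ‖⟨·⟩^{-a}‖₂ ‖⟨·⟩^a φ‖₂`, where `⟨·⟩^{-a} ∈ L²` exactly because `2a > 1`.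
-/

open MeasureTheory

/-- Convolution on ℝ. -/
noncomputable def convR (f g : ℝ → ℂ) (q : ℝ) : ℂ :=
  ∫ ξ : ℝ, f ξ * g (q - ξ)

open scoped ENNReal

theorem ENNReal.add_sq_le (a b : ℝ≥0∞) : (a + b) ^ 2 ≤ 2 * (a ^ 2 + b ^ 2) := by
  rcases eq_or_ne a ⊤ with rfl | ha
  · simp
  rcases eq_or_ne b ⊤ with rfl | hb
  · simp
  lift a to NNReal using ha
  lift b to NNReal using hb
  exact_mod_cast _root_.add_sq_le (a := a) (b := b)

theorem ENNReal.toReal_rpow_le_of_le_mul {L K A B : ℝ≥0∞} (h : L ≤ K * A * B) (hK : K ≠ ⊤)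
    (hA : A ≠ ⊤) (hB : B ≠ ⊤) {p : ℝ} (hp : 0 ≤ p) :
    L.toReal ^ p ≤ K.toReal ^ p * A.toReal ^ p * B.toReal ^ p := by
  have h' : L.toReal ≤ K.toReal * A.toReal * B.toReal := by
    rw [← ENNReal.toReal_mul, ← ENNReal.toReal_mul]
    exact ENNReal.toReal_mono (by finiteness) h
  rw [← Real.mul_rpow (by positivity) (by positivity),
    ← Real.mul_rpow (by positivity) (by positivity)]
  gcongr

section CauchySchwarz

variable {α : Type*} [MeasurableSpace α] {μ : Measure α}

theorem ENNReal.sq_lintegral_mul_le {f g : α → ℝ≥0∞} (hf : AEMeasurable f μ)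
    (hg : AEMeasurable g μ) :
    (∫⁻ x, f x * g x ∂μ) ^ 2 ≤ (∫⁻ x, f x ^ 2 ∂μ) * ∫⁻ x, g x ^ 2 ∂μ := by
  have h := ENNReal.lintegral_mul_le_Lp_mul_Lq μ Real.HolderConjugate.two_two hf hg
  simp only [Pi.mul_apply, ENNReal.rpow_two] at h
  calc (∫⁻ x, f x * g x ∂μ) ^ 2
      ≤ ((∫⁻ x, f x ^ 2 ∂μ) ^ (1 / 2 : ℝ) * (∫⁻ x, g x ^ 2 ∂μ) ^ (1 / 2 : ℝ)) ^ 2 := by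
        gcongr
    _ = (∫⁻ x, f x ^ 2 ∂μ) * ∫⁻ x, g x ^ 2 ∂μ := by
        rw [mul_pow, ← ENNReal.rpow_two, ← ENNReal.rpow_two, ← ENNReal.rpow_mul,
          ← ENNReal.rpow_mul]
        norm_num

theorem ENNReal.sq_lintegral_mul_le_lintegral_mul_lintegral_mul_sq {k h : α → ℝ≥0∞}
    (hk : AEMeasurable k μ) (hh : AEMeasurable h μ) :
    (∫⁻ x, k x * h x ∂μ) ^ 2 ≤ (∫⁻ x, k x ∂μ) * ∫⁻ x, k x * h x ^ 2 ∂μ := by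
  have hsqrt : ∀ t : ℝ≥0∞, (t ^ (1 / 2 : ℝ)) ^ 2 = t := fun t => by
    rw [← ENNReal.rpow_two, ← ENNReal.rpow_mul]; norm_num
  have hk' : AEMeasurable (fun x => k x ^ (1 / 2 : ℝ)) μ := hk.pow_const _
  calc (∫⁻ x, k x * h x ∂μ) ^ 2
      = (∫⁻ x, k x ^ (1 / 2 : ℝ) * (k x ^ (1 / 2 : ℝ) * h x) ∂μ) ^ 2 := by
        simp_rw [← mul_assoc, ← sq, hsqrt]
    _ ≤ (∫⁻ x, (k x ^ (1 / 2 : ℝ)) ^ 2 ∂μ) * ∫⁻ x, (k x ^ (1 / 2 : ℝ) * h x) ^ 2 ∂μ :=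
        ENNReal.sq_lintegral_mul_le hk' (hk'.mul hh)
    _ = (∫⁻ x, k x ∂μ) * ∫⁻ x, k x * h x ^ 2 ∂μ := by simp_rw [mul_pow, hsqrt]

theorem ENNReal.sq_lintegral_le_lintegral_inv_sq_mul {w φ : α → ℝ≥0∞} (hw : AEMeasurable w μ)
    (hφ : AEMeasurable φ μ) (hw0 : ∀ x, w x ≠ 0) (hwtop : ∀ x, w x ≠ ⊤) :
    (∫⁻ x, φ x ∂μ) ^ 2 ≤ (∫⁻ x, (w x)⁻¹ ^ 2 ∂μ) * ∫⁻ x, (w x * φ x) ^ 2 ∂μ := by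
  calc (∫⁻ x, φ x ∂μ) ^ 2 = (∫⁻ x, (w x)⁻¹ * (w x * φ x) ∂μ) ^ 2 := by
        simp_rw [← mul_assoc, ENNReal.inv_mul_cancel (hw0 _) (hwtop _), one_mul]
    _ ≤ _ := ENNReal.sq_lintegral_mul_le hw.inv (hw.mul hφ)

end CauchySchwarz

section Convolution

variable {G : Type*} [MeasurableSpace G] {μ : Measure G}

section AddGroup

variable [AddGroup G] [MeasurableAdd₂ G] [MeasurableNeg G]

theorem mul_lconvolution_le {w φ ψ : G → ℝ≥0∞} {C : ℝ≥0∞} (hw : Measurable w)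
    (hφ : Measurable φ) (hψ : Measurable ψ)
    (hwC : ∀ x y, w (x + y) ≤ C * (w x + w y)) (x : G) :
    w x * (φ ⋆ₗ[μ] ψ) x
      ≤ C * (((fun y => w y * φ y) ⋆ₗ[μ] ψ) x + (φ ⋆ₗ[μ] fun y => w y * ψ y) x) := by
  simp only [lconvolution_def]
  calc w x * ∫⁻ y, φ y * ψ (-y + x) ∂μ
      ≤ ∫⁻ y, w x * (φ y * ψ (-y + x)) ∂μ := lintegral_const_mul_le _ _
    _ ≤ ∫⁻ y, C * (w y * φ y * ψ (-y + x) + φ y * (w (-y + x) * ψ (-y + x))) ∂μ := by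
        refine lintegral_mono fun y => ?_
        calc w x * (φ y * ψ (-y + x))
            ≤ C * (w y + w (-y + x)) * (φ y * ψ (-y + x)) := by
              gcongr
              simpa using hwC y (-y + x)
          _ = _ := by ring
    _ = C * (∫⁻ y, w y * φ y * ψ (-y + x) ∂μ + ∫⁻ y, φ y * (w (-y + x) * ψ (-y + x)) ∂μ) := by
        rw [lintegral_const_mul _ (by fun_prop), lintegral_add_left (by fun_prop)]

variable [μ.IsAddLeftInvariant] [SFinite μ]

theorem lintegral_lconvolution_sq_le {k g : G → ℝ≥0∞} (hk : Measurable k)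
    (hg : Measurable g) :
    ∫⁻ x, (k ⋆ₗ[μ] g) x ^ 2 ∂μ ≤ (∫⁻ y, k y ∂μ) ^ 2 * ∫⁻ x, g x ^ 2 ∂μ := by
  have hprod : Measurable fun p : G × G => k p.2 * g (-p.2 + p.1) ^ 2 := by fun_prop
  calc ∫⁻ x, (k ⋆ₗ[μ] g) x ^ 2 ∂μ
      ≤ ∫⁻ x, (∫⁻ y, k y ∂μ) * ∫⁻ y, k y * g (-y + x) ^ 2 ∂μ ∂μ :=
        lintegral_mono fun x => ENNReal.sq_lintegral_mul_le_lintegral_mul_lintegral_mul_sq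
          hk.aemeasurable (by fun_prop)
    _ = (∫⁻ y, k y ∂μ) * ∫⁻ y, ∫⁻ x, k y * g (-y + x) ^ 2 ∂μ ∂μ := by
        rw [lintegral_const_mul _ hprod.lintegral_prod_right',
          lintegral_lintegral_swap hprod.aemeasurable]
    _ = (∫⁻ y, k y ∂μ) * ∫⁻ y, k y * ∫⁻ x, g x ^ 2 ∂μ ∂μ := by
        congr 1
        refine lintegral_congr fun y => ?_
        rw [lintegral_const_mul _ (by fun_prop),
          lintegral_add_left_eq_self (fun x => g x ^ 2) (-y)]
    _ = (∫⁻ y, k y ∂μ) ^ 2 * ∫⁻ x, g x ^ 2 ∂μ := by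
        rw [lintegral_mul_const _ hk, sq, mul_assoc]

theorem lintegral_lconvolution_sq_le_of_weight {w : G → ℝ≥0∞} (hw : Measurable w)
    (hw0 : ∀ x, w x ≠ 0) (hwtop : ∀ x, w x ≠ ⊤) {φ g : G → ℝ≥0∞} (hφ : Measurable φ)
    (hg : Measurable g) :
    ∫⁻ x, (φ ⋆ₗ[μ] g) x ^ 2 ∂μ
      ≤ (∫⁻ x, (w x)⁻¹ ^ 2 ∂μ) * (∫⁻ x, (w x * φ x) ^ 2 ∂μ) * ∫⁻ x, g x ^ 2 ∂μ :=
  (lintegral_lconvolution_sq_le hφ hg).trans <| by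
    gcongr
    exact ENNReal.sq_lintegral_le_lintegral_inv_sq_mul hw.aemeasurable hφ.aemeasurable hw0 hwtop

end AddGroup

theorem lintegral_mul_lconvolution_sq_le [AddCommGroup G] [MeasurableAdd₂ G] [MeasurableNeg G]
    [μ.IsAddLeftInvariant] [μ.IsNegInvariant] [SFinite μ] {w : G → ℝ≥0∞} (hw : Measurable w)
    (hw0 : ∀ x, w x ≠ 0) (hwtop : ∀ x, w x ≠ ⊤) {C : ℝ≥0∞}
    (hwC : ∀ x y, w (x + y) ≤ C * (w x + w y)) {φ ψ : G → ℝ≥0∞} (hφ : Measurable φ)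
    (hψ : Measurable ψ) :
    ∫⁻ x, (w x * (φ ⋆ₗ[μ] ψ) x) ^ 2 ∂μ
      ≤ 4 * C ^ 2 * (∫⁻ x, (w x)⁻¹ ^ 2 ∂μ)
        * (∫⁻ x, (w x * φ x) ^ 2 ∂μ) * ∫⁻ x, (w x * ψ x) ^ 2 ∂μ := by
  set I := ∫⁻ x, (w x)⁻¹ ^ 2 ∂μ
  set A := ∫⁻ x, (w x * φ x) ^ 2 ∂μ
  set B := ∫⁻ x, (w x * ψ x) ^ 2 ∂μ
  set T₁ := (fun y => w y * φ y) ⋆ₗ[μ] ψ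
  set T₂ := φ ⋆ₗ[μ] fun y => w y * ψ y
  have hT₁ : ∫⁻ x, T₁ x ^ 2 ∂μ ≤ I * B * A := by
    rw [show T₁ = ψ ⋆ₗ[μ] fun y => w y * φ y from lconvolution_comm]
    exact lintegral_lconvolution_sq_le_of_weight hw hw0 hwtop hψ (hw.mul hφ)
  have hT₂ : ∫⁻ x, T₂ x ^ 2 ∂μ ≤ I * A * B :=
    lintegral_lconvolution_sq_le_of_weight hw hw0 hwtop hφ (hw.mul hψ)
  calc ∫⁻ x, (w x * (φ ⋆ₗ[μ] ψ) x) ^ 2 ∂μ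
      ≤ ∫⁻ x, 2 * C ^ 2 * (T₁ x ^ 2 + T₂ x ^ 2) ∂μ := by
        refine lintegral_mono fun x => ?_
        calc (w x * (φ ⋆ₗ[μ] ψ) x) ^ 2 ≤ (C * (T₁ x + T₂ x)) ^ 2 :=
              pow_le_pow_left' (mul_lconvolution_le hw hφ hψ hwC x) 2
          _ ≤ C ^ 2 * (2 * (T₁ x ^ 2 + T₂ x ^ 2)) := by
              rw [mul_pow]
              gcongr
              exact ENNReal.add_sq_le _ _
          _ = 2 * C ^ 2 * (T₁ x ^ 2 + T₂ x ^ 2) := by ring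
    _ = 2 * C ^ 2 * (∫⁻ x, T₁ x ^ 2 ∂μ + ∫⁻ x, T₂ x ^ 2 ∂μ) := by
        rw [lintegral_const_mul _ (by fun_prop), lintegral_add_left (by fun_prop)]
    _ ≤ 2 * C ^ 2 * (I * B * A + I * A * B) := by gcongr
    _ = 4 * C ^ 2 * I * A * B := by ring

end Convolution

section BracketWeight

variable {E : Type*} [NormedAddCommGroup E]

/-- The weight `⟨x⟩^a` of `L^{2,a}`. -/
noncomputable def bracketWeight (a : ℝ) (x : E) : ℝ≥0∞ :=
  ENNReal.ofReal ((1 + ‖x‖ ^ 2) ^ (a / 2))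

theorem bracketWeight_ne_zero (a : ℝ) (x : E) : bracketWeight a x ≠ 0 := by
  rw [bracketWeight, ne_eq, ENNReal.ofReal_eq_zero, not_le]
  positivity

theorem bracketWeight_ne_top (a : ℝ) (x : E) : bracketWeight a x ≠ ⊤ := ENNReal.ofReal_ne_top

@[fun_prop]
theorem measurable_bracketWeight [MeasurableSpace E] [OpensMeasurableSpace E] (a : ℝ) :
    Measurable (bracketWeight a : E → ℝ≥0∞) := by
  unfold bracketWeight
  fun_prop

theorem bracketWeight_add_le {a : ℝ} (ha : 0 ≤ a) (x y : E) :
    bracketWeight a (x + y)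
      ≤ ENNReal.ofReal (2 ^ a) * (bracketWeight a x + bracketWeight a y) := by
  have hdominant : ∀ {u v : E}, ‖u‖ ≤ ‖v‖ →
      (1 + ‖u + v‖ ^ 2) ^ (a / 2) ≤ 2 ^ a * (1 + ‖v‖ ^ 2) ^ (a / 2) := by
    intro u v huv
    have hsq : 1 + ‖u + v‖ ^ 2 ≤ 4 * (1 + ‖v‖ ^ 2) := by
      nlinarith [norm_add_le u v, norm_nonneg (u + v), norm_nonneg u]
    calc (1 + ‖u + v‖ ^ 2) ^ (a / 2) ≤ (4 * (1 + ‖v‖ ^ 2)) ^ (a / 2) := by gcongr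
      _ = 2 ^ a * (1 + ‖v‖ ^ 2) ^ (a / 2) := by
        rw [Real.mul_rpow (by norm_num) (by positivity), show (4 : ℝ) = 2 ^ (2 : ℝ) by norm_num,
          ← Real.rpow_mul (by norm_num)]
        ring_nf
  rw [bracketWeight, bracketWeight, bracketWeight, ← ENNReal.ofReal_add (by positivity)
    (by positivity), ← ENNReal.ofReal_mul (by positivity)]
  refine ENNReal.ofReal_le_ofReal ?_
  rcases le_total ‖x‖ ‖y‖ with hxy | hyx
  · exact (hdominant hxy).trans (by gcongr; exact le_add_of_nonneg_left (by positivity))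
  · rw [add_comm x y]
    exact (hdominant hyx).trans (by gcongr; exact le_add_of_nonneg_right (by positivity))

theorem lintegral_inv_bracketWeight_sq_lt_top [NormedSpace ℝ E] [FiniteDimensional ℝ E]
    [MeasurableSpace E] [BorelSpace E] (μ : Measure E) [μ.IsAddHaarMeasure] {a : ℝ}
    (ha : Module.finrank ℝ E < 2 * a) :
    ∫⁻ x, (bracketWeight a x)⁻¹ ^ 2 ∂μ < ⊤ := by
  have hinv : ∀ x : E,
      (bracketWeight a x)⁻¹ ^ 2 = ENNReal.ofReal ((1 + ‖x‖ ^ 2) ^ (-(2 * a) / 2)) := by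
    intro x
    have hpos : (0 : ℝ) < 1 + ‖x‖ ^ 2 := by positivity
    rw [bracketWeight, ← ENNReal.ofReal_inv_of_pos (by positivity),
      ← ENNReal.ofReal_pow (by positivity), ← Real.rpow_neg hpos.le,
      ← Real.rpow_mul_natCast hpos.le]
    ring_nf
  simp_rw [hinv]
  exact (integrable_rpow_neg_one_add_norm_sq ha).lintegral_lt_top

end BracketWeight

section ExpWeight

noncomputable def expWeightedEnorm (c : ℝ) (f : ℝ → ℂ) (x : ℝ) : ℝ≥0∞ :=
  ENNReal.ofReal (Real.exp (c * |x|) * ‖f x‖)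

@[fun_prop]
theorem Measurable.expWeightedEnorm {f : ℝ → ℂ} (hf : Measurable f) (c : ℝ) :
    Measurable (expWeightedEnorm c f) := by
  unfold _root_.expWeightedEnorm
  fun_prop

theorem expWeightedEnorm_mono {c c' : ℝ} (hc : c ≤ c') (f : ℝ → ℂ) (x : ℝ) :
    expWeightedEnorm c f x ≤ expWeightedEnorm c' f x := by
  unfold expWeightedEnorm
  gcongr

theorem measurable_convR {f g : ℝ → ℂ} (hf : Measurable f) (hg : Measurable g) :
    Measurable (convR f g) :=
  ((by fun_prop : Measurable fun p : ℝ × ℝ => f p.2 * g (p.1 - p.2)).stronglyMeasurable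
    |>.integral_prod_right').measurable

theorem expWeightedEnorm_convR_le {c : ℝ} (hc : 0 ≤ c) (f g : ℝ → ℂ) (q : ℝ) :
    expWeightedEnorm c (convR f g) q
      ≤ (expWeightedEnorm c f ⋆ₗ expWeightedEnorm c g) q := by
  have hexp : ∀ y, Real.exp (c * |q|) ≤ Real.exp (c * |y|) * Real.exp (c * |q - y|) := by
    intro y
    rw [← Real.exp_add, ← mul_add]
    gcongr
    simpa using abs_add_le y (q - y)
  calc expWeightedEnorm c (convR f g) q
      = ENNReal.ofReal (Real.exp (c * |q|)) * ‖∫ y, f y * g (q - y)‖ₑ := by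
        rw [expWeightedEnorm, ENNReal.ofReal_mul (by positivity), ofReal_norm, convR]
    _ ≤ ENNReal.ofReal (Real.exp (c * |q|)) * ∫⁻ y, ‖f y * g (q - y)‖ₑ := by
        gcongr
        exact enorm_integral_le_lintegral_enorm _
    _ ≤ ∫⁻ y, ENNReal.ofReal (Real.exp (c * |q|)) * ‖f y * g (q - y)‖ₑ :=
        lintegral_const_mul_le _ _
    _ ≤ ∫⁻ y, expWeightedEnorm c f y * expWeightedEnorm c g (-y + q) := by
        refine lintegral_mono fun y => ?_
        rw [neg_add_eq_sub, expWeightedEnorm, expWeightedEnorm, ← ofReal_norm,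
          ← ENNReal.ofReal_mul (by positivity), ← ENNReal.ofReal_mul (by positivity), norm_mul]
        refine ENNReal.ofReal_le_ofReal ?_
        calc Real.exp (c * |q|) * (‖f y‖ * ‖g (q - y)‖)
            ≤ Real.exp (c * |y|) * Real.exp (c * |q - y|) * (‖f y‖ * ‖g (q - y)‖) := by
              gcongr
              exact hexp y
          _ = _ := by ring

theorem ofReal_weighted_sq_eq (a c : ℝ) (f : ℝ → ℂ) (x : ℝ) :
    ENNReal.ofReal ((1 + x ^ 2) ^ a * (Real.exp (c * |x|) * ‖f x‖) ^ 2)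
      = (bracketWeight a x * expWeightedEnorm c f x) ^ 2 := by
  rw [bracketWeight, expWeightedEnorm, ← ENNReal.ofReal_mul (by positivity),
    ← ENNReal.ofReal_pow (by positivity), mul_pow (_ ^ _), ← Real.rpow_mul_natCast (by positivity),
    Real.norm_eq_abs, sq_abs]
  ring_nf

theorem integrable_weighted_sq_iff {f : ℝ → ℂ} (hf : Measurable f) (a c : ℝ) :
    Integrable (fun x => (1 + x ^ 2) ^ a * (Real.exp (c * |x|) * ‖f x‖) ^ 2)
      ↔ ∫⁻ x, (bracketWeight a x * expWeightedEnorm c f x) ^ 2 < ⊤ := by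
  simp_rw [← ofReal_weighted_sq_eq]
  rw [Integrable, hasFiniteIntegral_iff_ofReal (.of_forall fun x => by positivity)]
  exact and_iff_right (by fun_prop : Measurable _).aestronglyMeasurable

theorem integral_weighted_sq_eq {f : ℝ → ℂ} (hf : Measurable f) (a c : ℝ) :
    ∫ x, (1 + x ^ 2) ^ a * (Real.exp (c * |x|) * ‖f x‖) ^ 2
      = (∫⁻ x, (bracketWeight a x * expWeightedEnorm c f x) ^ 2).toReal := by
  simp_rw [← ofReal_weighted_sq_eq]
  exact integral_eq_lintegral_of_nonneg_ae (.of_forall fun x => by positivity)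
    (by fun_prop : Measurable _).aestronglyMeasurable

theorem lintegral_weighted_sq_lt_top_of_le {f : ℝ → ℂ} (hf : Measurable f) {a c c' : ℝ}
    (hc : c ≤ c') (hint : Integrable fun x => (1 + x ^ 2) ^ a * (Real.exp (c' * |x|) * ‖f x‖) ^ 2) :
    ∫⁻ x, (bracketWeight a x * expWeightedEnorm c f x) ^ 2 < ⊤ :=
  lt_of_le_of_lt (lintegral_mono fun x => by gcongr; exact expWeightedEnorm_mono hc f x)
    ((integrable_weighted_sq_iff hf a c').1 hint)

end ExpWeight

theorem exp_weighted_convolution_bound (a c₁ c₂ : ℝ) (ha : a > 1 / 2)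
    (hc₁ : 0 < c₁) (hc₂ : 0 < c₂) :
    ∃ C > 0, ∀ f₁ f₂ : ℝ → ℂ, Measurable f₁ → Measurable f₂ →
      Integrable (fun Q => (1 + Q ^ 2) ^ a * (Real.exp (c₁ * |Q|) * ‖f₁ Q‖) ^ 2) →
      Integrable (fun Q => (1 + Q ^ 2) ^ a * (Real.exp (c₂ * |Q|) * ‖f₂ Q‖) ^ 2) →
      Integrable (fun Q => (1 + Q ^ 2) ^ a
          * (Real.exp (min c₁ c₂ * |Q|) * ‖convR f₁ f₂ Q‖) ^ 2) ∧
      (∫ Q, (1 + Q ^ 2) ^ a * (Real.exp (min c₁ c₂ * |Q|) * ‖convR f₁ f₂ Q‖) ^ 2) ^ (1/2 : ℝ)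
        ≤ C * (∫ Q, (1 + Q ^ 2) ^ a * (Real.exp (min c₁ c₂ * |Q|) * ‖f₁ Q‖) ^ 2) ^ (1/2 : ℝ)
            * (∫ Q, (1 + Q ^ 2) ^ a * (Real.exp (min c₁ c₂ * |Q|) * ‖f₂ Q‖) ^ 2) ^ (1/2 : ℝ) := by
  set K : ℝ≥0∞ := 4 * ENNReal.ofReal (2 ^ a) ^ 2 * ∫⁻ x : ℝ, (bracketWeight a x)⁻¹ ^ 2
  have hK : K ≠ ⊤ := by
    have := lintegral_inv_bracketWeight_sq_lt_top (volume : Measure ℝ) (a := a)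
      (by rw [Module.finrank_self, Nat.cast_one]; linarith)
    finiteness
  refine ⟨K.toReal ^ (1 / 2 : ℝ) + 1, by positivity, fun f₁ f₂ hf₁ hf₂ hint₁ hint₂ => ?_⟩
  set c := min c₁ c₂
  have hconv : ∫⁻ x, (bracketWeight a x * expWeightedEnorm c (convR f₁ f₂) x) ^ 2
      ≤ K * (∫⁻ x, (bracketWeight a x * expWeightedEnorm c f₁ x) ^ 2)
        * ∫⁻ x, (bracketWeight a x * expWeightedEnorm c f₂ x) ^ 2 :=
    calc _ ≤ ∫⁻ x, (bracketWeight a x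
          * (expWeightedEnorm c f₁ ⋆ₗ expWeightedEnorm c f₂) x) ^ 2 := by
          gcongr with x
          exact expWeightedEnorm_convR_le (le_min hc₁.le hc₂.le) f₁ f₂ x
      _ ≤ _ := lintegral_mul_lconvolution_sq_le (measurable_bracketWeight a)
          (bracketWeight_ne_zero a) (bracketWeight_ne_top a)
          (bracketWeight_add_le (by linarith)) (hf₁.expWeightedEnorm c) (hf₂.expWeightedEnorm c)
  have hA₁ := (lintegral_weighted_sq_lt_top_of_le hf₁ (min_le_left c₁ c₂) hint₁).ne
  have hA₂ := (lintegral_weighted_sq_lt_top_of_le hf₂ (min_le_right c₁ c₂) hint₂).ne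
  rw [integrable_weighted_sq_iff (measurable_convR hf₁ hf₂), integral_weighted_sq_eq hf₁,
    integral_weighted_sq_eq hf₂, integral_weighted_sq_eq (measurable_convR hf₁ hf₂)]
  refine ⟨hconv.trans_lt (by finiteness), ?_⟩
  refine (ENNReal.toReal_rpow_le_of_le_mul hconv hK hA₁ hA₂ (by norm_num)).trans ?_
  gcongr
  exact le_add_of_nonneg_right zero_le_one
end

section
/- Abel's identity: for any integers y ≥ 0 and nonzero constants c₁, c₂ with all terms defined, Σ_{x=0}^{y} (y choose x) (x+c₁)^{x-1} (y-x+c₂)^{y-x-1} = ((c₁+c₂)/(c₁c₂)) (y+c₁+c₂)^{y-1}. -/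
/-!
Put `A = x + c₁` and `B = y - x + c₂`, so that `A + B = y + c₁ + c₂` for every `x`. Multiplying the
sum by `A + B` splits it into the Abel sum
`∑ₖ C(n,k) (k+a)^(k-1) (n-k+b)^(n-k) = a⁻¹ (n+a+b)^n` and its mirror image `k ↦ n - k`.
The Abel sum is evaluated by expanding `(n-k+b)^(n-k) = ((n+a+b) - (k+a))^(n-k)` binomially and
exchanging the two summations: for `j < n` the coefficient of `(n+a+b)^j` is an `(n-j)`-th forward
difference of a polynomial of degree `n-j-1`, hence vanishes.
-/

open Finset

theorem Nat.choose_mul_choose_sub_comm (n k j : ℕ) :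
    n.choose k * (n - k).choose j = n.choose j * (n - j).choose k := by
  have hk := Nat.choose_mul (n := n) (Nat.le_add_right k j)
  have hj := Nat.choose_mul (n := n) (Nat.le_add_left j k)
  rw [Nat.add_sub_cancel_left, Nat.choose_symm_add] at hk
  rw [Nat.add_sub_cancel] at hj
  rw [← hk, ← hj]

theorem sum_range_neg_one_pow_mul_choose_mul_pow_eq_zero {R : Type*} [CommRing R] {j m : ℕ}
    (h : j < m) (a : R) :
    ∑ k ∈ range (m + 1), (-1) ^ (m - k) * (m.choose k : R) * (k + a) ^ j = 0 := by
  have := congr_fun (fwdDiff_iter_pow_eq_zero_of_lt (R := R) h) a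
  rw [fwdDiff_iter_eq_sum_shift] at this
  simpa [zsmul_eq_mul, add_comm] using this

section

variable {K : Type*} [Field K]

theorem zpow_sub_one_mul_pow_sub {a : K} (ha : a ≠ 0) {k m : ℕ} (hkm : k ≤ m) (hm : 1 ≤ m) :
    ((k : K) + a) ^ ((k : ℤ) - 1) * ((k : K) + a) ^ (m - k) = ((k : K) + a) ^ (m - 1) := by
  rcases k with _ | l
  · simp [pow_sub₀ a ha hm, mul_comm]
  · rw [show ((l + 1 : ℕ) : ℤ) - 1 = l by omega, zpow_natCast, ← pow_add]
    congr 1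
    omega

theorem add_mul_zpow_sub_one_mul_zpow_sub_one {a b : K} (ha : a ≠ 0) (hb : b ≠ 0) (p q : ℕ) :
    (a + b) * (a ^ ((p : ℤ) - 1) * b ^ ((q : ℤ) - 1))
      = a ^ p * b ^ ((q : ℤ) - 1) + a ^ ((p : ℤ) - 1) * b ^ q := by
  rw [zpow_sub_one₀ ha, zpow_sub_one₀ hb, zpow_natCast, zpow_natCast]
  field_simp

theorem sum_choose_mul_zpow_mul_pow_eq (n : ℕ) {a : K} (ha : a ≠ 0) (b : K) :
    ∑ k ∈ range (n + 1), (n.choose k : K) * ((k : K) + a) ^ ((k : ℤ) - 1)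
        * ((n : K) - k + b) ^ (n - k) = a⁻¹ * ((n : K) + a + b) ^ n := by
  set s : K := n + a + b
  have expand : ∀ k ∈ range (n + 1), (n.choose k : K) * ((k : K) + a) ^ ((k : ℤ) - 1)
      * ((n : K) - k + b) ^ (n - k) = ∑ j ∈ range (n - k + 1), s ^ j *
        ((n.choose k * (n - k).choose j : ℕ) * ((k : K) + a) ^ ((k : ℤ) - 1)
          * (-((k : K) + a)) ^ (n - k - j)) := by
    intro k _
    rw [show (n : K) - k + b = s + -(k + a) by ring, add_pow, mul_sum]
    refine sum_congr rfl fun j _ => ?_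
    push_cast
    ring
  rw [sum_congr rfl expand, sum_comm' (t' := range (n + 1)) (s' := fun j => range (n - j + 1))
      fun k j => by simp only [mem_range]; omega,
    sum_eq_single_of_mem n (mem_range.2 n.lt_succ_self)]
  · simp [mul_comm]
  intro j hj hjn
  obtain ⟨m, rfl⟩ : ∃ m, n = j + m := ⟨n - j, by simp only [mem_range] at hj; omega⟩
  have hm : 1 ≤ m := by omega
  calc ∑ k ∈ range (j + m - j + 1), s ^ j * ((((j + m).choose k * (j + m - k).choose j : ℕ) : K)
          * ((k : K) + a) ^ ((k : ℤ) - 1) * (-((k : K) + a)) ^ (j + m - k - j))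
      = s ^ j * ((j + m).choose j : K) * ∑ k ∈ range (m + 1),
          (-1) ^ (m - k) * (m.choose k : K) * ((k : K) + a) ^ (m - 1) := by
        rw [Nat.add_sub_cancel_left, mul_sum]
        refine sum_congr rfl fun k hk => ?_
        have hkm : k ≤ m := Nat.lt_succ_iff.1 (mem_range.1 hk)
        rw [Nat.choose_mul_choose_sub_comm, Nat.add_sub_cancel_left,
          show j + m - k - j = m - k by omega, neg_pow, ← zpow_sub_one_mul_pow_sub ha hkm hm]
        push_cast
        ring
    _ = 0 := by rw [sum_range_neg_one_pow_mul_choose_mul_pow_eq_zero (by omega), mul_zero]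

theorem sum_choose_mul_pow_mul_zpow_eq (n : ℕ) (a : K) {b : K} (hb : b ≠ 0) :
    ∑ k ∈ range (n + 1), (n.choose k : K) * ((k : K) + a) ^ k
        * ((n : K) - k + b) ^ ((n : ℤ) - k - 1) = b⁻¹ * ((n : K) + a + b) ^ n := by
  rw [← sum_range_reflect, add_right_comm, ← sum_choose_mul_zpow_mul_pow_eq n hb a]
  refine sum_congr rfl fun k hk => ?_
  have hkn : k ≤ n := Nat.lt_succ_iff.1 (mem_range.1 hk)
  push_cast [Nat.add_sub_cancel, Nat.choose_symm hkn, Nat.sub_sub_self hkn, Nat.cast_sub hkn]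
  rw [show (n : K) - (n - k) + b = k + b by ring, show (n : ℤ) - (n - k) - 1 = k - 1 by ring]
  ring

end

/-- Abel's binomial identity. -/
theorem abel_identity (y : ℕ) (c₁ c₂ : ℝ) (hc₁ : c₁ ≠ 0) (hc₂ : c₂ ≠ 0)
    (hterms : ∀ x : ℕ, x ≤ y → ((x : ℝ) + c₁) ≠ 0 ∧ ((y : ℝ) - (x : ℝ) + c₂) ≠ 0)
    (hsum : (y : ℝ) + c₁ + c₂ ≠ 0) :
    ∑ x ∈ Finset.range (y + 1),
        (y.choose x : ℝ) * ((x : ℝ) + c₁) ^ ((x : ℤ) - 1)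
          * ((y : ℝ) - (x : ℝ) + c₂) ^ ((y : ℤ) - (x : ℤ) - 1)
      = ((c₁ + c₂) / (c₁ * c₂)) * ((y : ℝ) + c₁ + c₂) ^ ((y : ℤ) - 1) := by
  have hsplit : ((y : ℝ) + c₁ + c₂) * ∑ x ∈ range (y + 1),
        (y.choose x : ℝ) * ((x : ℝ) + c₁) ^ ((x : ℤ) - 1)
          * ((y : ℝ) - (x : ℝ) + c₂) ^ ((y : ℤ) - (x : ℤ) - 1)
      = ∑ x ∈ range (y + 1), (y.choose x : ℝ) * ((x : ℝ) + c₁) ^ x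
          * ((y : ℝ) - (x : ℝ) + c₂) ^ ((y : ℤ) - (x : ℤ) - 1)
        + ∑ x ∈ range (y + 1), (y.choose x : ℝ) * ((x : ℝ) + c₁) ^ ((x : ℤ) - 1)
          * ((y : ℝ) - (x : ℝ) + c₂) ^ (y - x) := by
    rw [mul_sum, ← sum_add_distrib]
    refine sum_congr rfl fun x hx => ?_
    have hxy : x ≤ y := Nat.lt_succ_iff.1 (mem_range.1 hx)
    obtain ⟨h₁, h₂⟩ := hterms x hxy
    have key := add_mul_zpow_sub_one_mul_zpow_sub_one h₁ h₂ x (y - x)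
    rw [show (x : ℝ) + c₁ + ((y : ℝ) - x + c₂) = y + c₁ + c₂ by ring, Nat.cast_sub hxy] at key
    linear_combination (y.choose x : ℝ) * key
  rw [sum_choose_mul_pow_mul_zpow_eq y c₁ hc₂, sum_choose_mul_zpow_mul_pow_eq y hc₁ c₂] at hsplit
  apply mul_left_cancel₀ hsum
  rw [hsplit, zpow_sub_one₀ hsum, zpow_natCast]
  field_simp
end
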